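/- arXiv:2405.09397 — 2 statements merged into one kernel-verified Lean document; each statement's English description precedes it below -/
import Mathlib

section
/- Let p > 1, let (X_i) be i.i.d. uniform on T^2, μ^n = (1/n)∑ δ_{X_i}, and ρ_{t,n} the density of P_t μ^n. Let t_n = (ln a)^{−1} K_n n^{−1} ln n with K_n ≥ 1 and n t_n / ln n → ∞ while ln(n t_n)/ln n → 0, where a = a(T^2) > 1 is the constant of the concentration estimate for ‖ρ_{t,n} − 1‖_∞. Fix k > 0 and take c_n → 0^+ such that liminf_n K_n c_n^2 > k + 5. Then sup_{n ≥ 2} n^k · E[ 1_{{‖ρ_{t_n,n} − 1‖_∞ > c_n}} ∫_{T^2} |ρ_{t_n,n} − 1|^p dm ] < ∞. -/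
open MeasureTheory Real Filter Topology
open scoped ENNReal

noncomputable section

instance : Fact ((0:ℝ) < 1) := ⟨one_pos⟩

/-- The flat two-dimensional torus `T² = ℝ²/ℤ²`. -/
abbrev T2 : Type := AddCircle (1:ℝ) × AddCircle (1:ℝ)

/-- The flat (quotient) distance on `T²`. -/
def dT (x y : T2) : ℝ := Real.sqrt ((dist x.1 y.1) ^ 2 + (dist x.2 y.2) ^ 2)

/-- Couplings between two measures on `T²`. -/
def couplings (μ ν : Measure T2) : Set (Measure (T2 × T2)) :=
  {γ | γ.map Prod.fst = μ ∧ γ.map Prod.snd = ν}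

/-- `Wpp p μ ν = W_p(μ,ν)^p`, the minimal transport cost with cost `dT^p`. -/
def Wpp (p : ℝ) (μ ν : Measure T2) : ℝ :=
  sInf ((fun γ : Measure (T2 × T2) => ∫ z, dT z.1 z.2 ^ p ∂γ) '' couplings μ ν)

/-- The `p`-Wasserstein distance on `T²`. -/
def Wp (p : ℝ) (μ ν : Measure T2) : ℝ := Wpp p μ ν ^ (1 / p)

/-- Canonical projection `ℝ² → T²`. -/
def projT (z : ℝ × ℝ) : T2 := ((z.1 : AddCircle (1:ℝ)), (z.2 : AddCircle (1:ℝ)))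

/-- The `ℤ²`-periodic lift of a function on `T²`. -/
def liftT (f : T2 → ℝ) : ℝ × ℝ → ℝ := fun z => f (projT z)

/-- `f : T² → ℝ` is smooth if its periodic lift is `C^∞`. -/
def SmoothT (f : T2 → ℝ) : Prop := ContDiff ℝ (⊤ : ℕ∞) (liftT f)

/-- `G` is the (everywhere) classical gradient of `f : T² → ℝ`. -/
def HasGradT (f : T2 → ℝ) (G : T2 → ℝ × ℝ) : Prop :=
  ∀ z : ℝ × ℝ, HasFDerivAt (liftT f)
    ((G (projT z)).1 • ContinuousLinearMap.fst ℝ ℝ ℝ +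
      (G (projT z)).2 • ContinuousLinearMap.snd ℝ ℝ ℝ) z

/-- Euclidean norm on `ℝ²` (as a product). -/
def gn (v : ℝ × ℝ) : ℝ := Real.sqrt (v.1 ^ 2 + v.2 ^ 2)

/-- Euclidean scalar product on `ℝ²` (as a product). -/
def gdot (v w : ℝ × ℝ) : ℝ := v.1 * w.1 + v.2 * w.2

/-- `G` is the weak (distributional) gradient of `f` on `T²`. -/
def IsWeakGradT (f : T2 → ℝ) (G : T2 → ℝ × ℝ) : Prop :=
  ∀ (η : T2 → ℝ) (Gη : T2 → ℝ × ℝ), SmoothT η → HasGradT η Gη →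
    ((∫ x : T2, f x * (Gη x).1) = - ∫ x : T2, (G x).1 * η x) ∧
    ((∫ x : T2, f x * (Gη x).2) = - ∫ x : T2, (G x).2 * η x)

/-- `f ∈ H^{1,q}(T²)` with weak gradient `G`. -/
def MemH1q (q : ℝ) (f : T2 → ℝ) (G : T2 → ℝ × ℝ) : Prop :=
  IsWeakGradT f G ∧ MemLp f (ENNReal.ofReal q) volume ∧
    MemLp (fun x => gn (G x)) (ENNReal.ofReal q) volume

/-- `φ` (with weak gradient `G`) is a distributional solution of the `q`-Poisson
equation `-div(|∇φ|^{q-2}∇φ) = ρ₁ - ρ₀` on `T²`, tested against all `H^{1,q}` functions. -/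
def SolvesQPoisson (q : ℝ) (φ : T2 → ℝ) (G : T2 → ℝ × ℝ) (ρ₀ ρ₁ : T2 → ℝ) : Prop :=
  MemH1q q φ G ∧
  ∀ (η : T2 → ℝ) (Gη : T2 → ℝ × ℝ), MemH1q q η Gη →
    (∫ x : T2, gn (G x) ^ (q - 2) * gdot (G x) (Gη x)) = ∫ x : T2, (ρ₁ x - ρ₀ x) * η x

/-- The periodic heat kernel on `ℝ²`. -/
def HK (t : ℝ) (z : ℝ × ℝ) : ℝ :=
  ∑' n : ℤ × ℤ, (1 / (4 * π * t)) *
    Real.exp (-(((z.1 + (n.1 : ℝ)) ^ 2 + (z.2 + (n.2 : ℝ)) ^ 2)) / (4 * t))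

/-- A canonical representative in `[0,1)²` of a point of `T²`. -/
def repT (x : T2) : ℝ × ℝ :=
  (((AddCircle.equivIco 1 0 x.1 : Set.Ico (0:ℝ) (0 + 1)) : ℝ),
   ((AddCircle.equivIco 1 0 x.2 : Set.Ico (0:ℝ) (0 + 1)) : ℝ))

/-- The heat kernel as a function on the torus. -/
def HKT (t : ℝ) (x : T2) : ℝ := HK t (repT x)

/-- Density of the heat-regularized measure `P_t μ`. -/
def heatDensity (t : ℝ) (μ : Measure T2) : T2 → ℝ := fun x => ∫ y, HKT t (x - y) ∂μ

/-- The heat semigroup acting on measures on `T²`. -/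
def Pt (t : ℝ) (μ : Measure T2) : Measure T2 :=
  volume.withDensity fun x => ENNReal.ofReal (heatDensity t μ x)

/-- The empirical measure of the first `n` samples. -/
def empMeas {Ω : Type*} [MeasurableSpace Ω] (X : ℕ → Ω → T2) (n : ℕ) (ω : Ω) : Measure T2 :=
  ((n : ℝ≥0∞))⁻¹ • ∑ i ∈ Finset.range n, Measure.dirac (X i ω)

/-- The Hopf–Lax semigroup with power `p` on `T²` (`Q_0 f = f`). -/
def QHL (p : ℝ) (f : T2 → ℝ) (t : ℝ) (x : T2) : ℝ :=
  if t = 0 then f x else ⨅ y : T2, (f y + dT x y ^ p / (p * t ^ (p - 1)))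

/-- Gradient of a function on `ℝ²`, via `fderiv`. -/
def gradAt (f : ℝ × ℝ → ℝ) (z : ℝ × ℝ) : ℝ × ℝ :=
  (fderiv ℝ f z (1, 0), fderiv ℝ f z (0, 1))

/-- Second derivatives of a function on `ℝ²`. -/
def hessAt (f : ℝ × ℝ → ℝ) (z : ℝ × ℝ) (v w : ℝ × ℝ) : ℝ :=
  fderiv ℝ (fun y => fderiv ℝ f y v) z w

/-- The `q`-Laplacian of a `C²` function on `ℝ²`, at points where the gradient
does not vanish, via the expansion
`Δ_q f = |∇f|^{q-4} (|∇f|² Δf + (q-2) ∑ ∂ᵢf ∂ⱼf ∂ᵢⱼf)`. -/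
def qLap (q : ℝ) (f : ℝ × ℝ → ℝ) (z : ℝ × ℝ) : ℝ :=
  gn (gradAt f z) ^ (q - 4) *
    (gn (gradAt f z) ^ (2:ℝ) * (hessAt f z (1,0) (1,0) + hessAt f z (0,1) (0,1)) +
      (q - 2) * ((gradAt f z).1 ^ 2 * hessAt f z (1,0) (1,0) +
        2 * (gradAt f z).1 * (gradAt f z).2 * hessAt f z (1,0) (0,1) +
        (gradAt f z).2 ^ 2 * hessAt f z (0,1) (0,1)))

/-- `f` is a viscosity supersolution of `-Δ_q u + g = 0` on `T²`. -/
def IsViscositySupersol (q : ℝ) (f : T2 → ℝ) (g : T2 → ℝ) : Prop :=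
  LowerSemicontinuous f ∧
  ∀ (x₀ : T2) (φ : T2 → ℝ), ContDiff ℝ 2 (liftT φ) →
    IsLocalMin (fun x => f x - φ x) x₀ →
    gradAt (liftT φ) (repT x₀) ≠ 0 →
    0 ≤ -qLap q (liftT φ) (repT x₀) + g x₀

/-- Supremum norm distance of a density from `1`. -/
def supDist1 (ρ : T2 → ℝ) : ℝ := ⨆ y : T2, |ρ y - 1|

/-- `L^∞` (essential sup) norm of a function on `T²`. -/
def linftyNorm (f : T2 → ℝ) : ℝ := (eLpNorm f ⊤ volume).toReal



namespace LpAux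

lemma summable_S : Summable (fun m : ℤ => Real.exp (1 - |(m:ℝ)|)) := by
  have hgeo : Summable (fun n : ℕ => Real.exp 1 * Real.exp (-1) ^ n) :=
    (summable_geometric_of_lt_one (Real.exp_nonneg _)
      (by rw [Real.exp_lt_one_iff]; norm_num)).mul_left _
  have key : ∀ n : ℕ, Real.exp 1 * Real.exp (-1) ^ n = Real.exp (1 - (n:ℝ)) := by
    intro n
    rw [← Real.exp_nat_mul, ← Real.exp_add]
    ring_nf
  apply Summable.of_nat_of_neg
  · apply (hgeo.congr ?_)
    intro n; rw [key]; norm_num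
  · apply (hgeo.congr ?_)
    intro n; rw [key]; push_cast; rw [abs_neg, abs_of_nonneg (by positivity : (0:ℝ) ≤ (n:ℝ))]

def S : ℝ := ∑' m : ℤ, Real.exp (1 - |(m:ℝ)|)

lemma S_nonneg : 0 ≤ S := tsum_nonneg fun _ => (Real.exp_nonneg _)

lemma S_pos : 0 < S := by
  have h := Summable.le_tsum summable_S 0 (fun m _ => Real.exp_nonneg _)
  simp only [Int.cast_zero, abs_zero, sub_zero] at h
  exact lt_of_lt_of_le (Real.exp_pos 1) h

lemma key_sq {z : ℝ} (hz0 : 0 ≤ z) (hz1 : z < 1) (m : ℤ) : |(m:ℝ)| - 1 ≤ (z + m)^2 := by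
  rcases le_or_gt 0 m with h | h
  · have h' : (0:ℝ) ≤ (m:ℝ) := by exact_mod_cast h
    rw [abs_of_nonneg h']
    nlinarith [sq_nonneg ((m:ℝ) - 1), mul_nonneg hz0 h', sq_nonneg z]
  · have h1 : m ≤ -1 := by omega
    rcases eq_or_lt_of_le h1 with rfl | h2
    · rw [show ((((-1:ℤ)):ℝ)) = (-1:ℝ) by norm_num, abs_of_neg (by norm_num : (-1:ℝ) < 0)]
      nlinarith [sq_nonneg (z - 1)]
    · have h2' : m ≤ -2 := by omega
      have hm : (m:ℝ) ≤ -2 := by exact_mod_cast h2'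
      rw [abs_of_neg (by linarith : (m:ℝ) < 0)]
      nlinarith [sq_nonneg (z + (m:ℝ) + 1)]

lemma HK_nonneg {t : ℝ} (ht : 0 < t) (z : ℝ × ℝ) : 0 ≤ HK t z :=
  tsum_nonneg fun n => mul_nonneg (by positivity) (Real.exp_nonneg _)

lemma HK_le {t : ℝ} (ht : 0 < t) (ht4 : t ≤ 1/4) {z : ℝ × ℝ}
    (h10 : 0 ≤ z.1) (h11 : z.1 < 1) (h20 : 0 ≤ z.2) (h21 : z.2 < 1) :
    HK t z ≤ S ^ 2 / (4 * π * t) := by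
  have hπ : 0 < 4 * π * t := by positivity
  have hSnn := S_nonneg
  apply tsum_le_of_sum_le' (by positivity)
  intro u
  have hterm : ∀ n : ℤ × ℤ,
      (1 / (4*π*t)) * Real.exp (-(((z.1 + (n.1:ℝ))^2 + (z.2+(n.2:ℝ))^2)) / (4*t)) ≤
      (1/(4*π*t)) * (Real.exp (1 - |(n.1:ℝ)|) * Real.exp (1 - |(n.2:ℝ)|)) := by
    intro n
    apply mul_le_mul_of_nonneg_left _ (by positivity)
    rw [← Real.exp_add]
    apply Real.exp_le_exp.2
    have k1 := key_sq h10 h11 n.1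
    have k2 := key_sq h20 h21 n.2
    have hA : (0:ℝ) ≤ (z.1 + (n.1:ℝ))^2 + (z.2+(n.2:ℝ))^2 := by positivity
    have hdiv : ((z.1 + (n.1:ℝ))^2 + (z.2+(n.2:ℝ))^2) ≤
        ((z.1 + (n.1:ℝ))^2 + (z.2+(n.2:ℝ))^2) / (4*t) := by
      rw [le_div_iff₀ (by linarith)]
      nlinarith
    rw [neg_div]
    linarith
  calc ∑ n ∈ u, (1 / (4*π*t)) *
        Real.exp (-(((z.1 + (n.1:ℝ))^2 + (z.2+(n.2:ℝ))^2)) / (4*t))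
      ≤ ∑ n ∈ u, (1/(4*π*t)) * (Real.exp (1 - |(n.1:ℝ)|) * Real.exp (1 - |(n.2:ℝ)|)) :=
        Finset.sum_le_sum fun n _ => hterm n
    _ ≤ ∑ n ∈ (u.image Prod.fst) ×ˢ (u.image Prod.snd),
          (1/(4*π*t)) * (Real.exp (1 - |(n.1:ℝ)|) * Real.exp (1 - |(n.2:ℝ)|)) := by
        apply Finset.sum_le_sum_of_subset_of_nonneg
        · intro x hx
          exact Finset.mem_product.2 ⟨Finset.mem_image_of_mem _ hx, Finset.mem_image_of_mem _ hx⟩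
        · intro i _ _; positivity
    _ = (1/(4*π*t)) * ((∑ i ∈ u.image Prod.fst, Real.exp (1 - |(i:ℝ)|)) *
          (∑ j ∈ u.image Prod.snd, Real.exp (1 - |(j:ℝ)|))) := by
        rw [Finset.sum_product, Finset.sum_mul_sum]
        simp only [Finset.mul_sum]
    _ ≤ (1/(4*π*t)) * (S * S) := by
        apply mul_le_mul_of_nonneg_left _ (by positivity)
        apply mul_le_mul
        · exact Summable.sum_le_tsum _ (fun i _ => Real.exp_nonneg _) summable_S
        · exact Summable.sum_le_tsum _ (fun i _ => Real.exp_nonneg _) summable_S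
        · exact Finset.sum_nonneg fun i _ => Real.exp_nonneg _
        · exact S_nonneg
    _ = S ^ 2 / (4 * π * t) := by ring

lemma repT_mem (x : T2) : 0 ≤ (repT x).1 ∧ (repT x).1 < 1 ∧ 0 ≤ (repT x).2 ∧ (repT x).2 < 1 := by
  have h1 := (AddCircle.equivIco 1 0 x.1).2
  have h2 := (AddCircle.equivIco 1 0 x.2).2
  simp only [Set.mem_Ico, zero_add] at h1 h2
  exact ⟨h1.1, h1.2, h2.1, h2.2⟩

lemma HKT_nonneg {t : ℝ} (ht : 0 < t) (x : T2) : 0 ≤ HKT t x := HK_nonneg ht _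

lemma HKT_le {t : ℝ} (ht : 0 < t) (ht4 : t ≤ 1/4) (x : T2) : HKT t x ≤ S ^ 2 / (4 * π * t) := by
  obtain ⟨a, b, c, d⟩ := repT_mem x
  exact HK_le ht ht4 a b c d

lemma integral_le_mul_meas {X : Type*} [MeasurableSpace X] {μ : Measure X} {f : X → ℝ}
    {s : Set X} {B : ℝ} (hB : 0 < B) (hs : μ s ≠ ⊤)
    (h1 : ∀ x ∈ s, f x ≤ B) (h2 : ∀ x ∉ s, f x ≤ 0) :
    ∫ x, f x ∂μ ≤ B * (μ s).toReal := by
  have h := integral_le_measure (μ := μ) (f := fun x => f x / B) (s := s)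
    (fun x hx => (div_le_one hB).2 (h1 x hx))
    (fun x hx => div_nonpos_of_nonpos_of_nonneg (h2 x hx) hB.le)
  have h' : ∫ x, f x / B ∂μ ≤ (μ s).toReal := by
    rcases le_or_gt (∫ x, f x / B ∂μ) 0 with h0 | h0
    · exact h0.trans ENNReal.toReal_nonneg
    · exact (ENNReal.ofReal_le_iff_le_toReal hs).1 h
  rw [integral_div, div_le_iff₀ hB] at h'
  linarith

lemma integral_le_const {X : Type*} [MeasurableSpace X] {μ : Measure X}
    (hμ : μ Set.univ = 1) {f : X → ℝ} {B : ℝ} (hB : 0 < B) (h1 : ∀ x, f x ≤ B) :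
    ∫ x, f x ∂μ ≤ B := by
  have := integral_le_mul_meas (μ := μ) (s := Set.univ) hB (by simp [hμ])
    (fun x _ => h1 x) (fun x hx => absurd (Set.mem_univ x) hx)
  simpa [hμ] using this

lemma empMeas_univ {Ω : Type*} [MeasurableSpace Ω] (X : ℕ → Ω → T2) {n : ℕ} (hn : 1 ≤ n)
    (ω : Ω) : empMeas X n ω Set.univ = 1 := by
  have hn0 : (n : ℝ≥0∞) ≠ 0 := by exact Nat.cast_ne_zero.mpr (by omega)
  simp [empMeas, Measure.smul_apply, Measure.finset_sum_apply, smul_eq_mul,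
    ENNReal.inv_mul_cancel hn0 (ENNReal.natCast_ne_top n)]

lemma T2_univ : (volume : Measure T2) Set.univ = 1 := by
  rw [show (Set.univ : Set T2) = Set.univ ×ˢ Set.univ from (Set.univ_prod_univ).symm,
    Measure.volume_eq_prod _ _, Measure.prod_prod, AddCircle.measure_univ]
  simp

lemma heatDensity_nonneg {t : ℝ} (ht : 0 < t) (μ : Measure T2) (x : T2) :
    0 ≤ heatDensity t μ x := integral_nonneg fun y => HKT_nonneg ht _

lemma heatDensity_le {t : ℝ} (ht : 0 < t) (ht4 : t ≤ 1/4) {Ω : Type*} [MeasurableSpace Ω]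
    (X : ℕ → Ω → T2) {n : ℕ} (hn : 1 ≤ n) (ω : Ω) (x : T2) :
    heatDensity t (empMeas X n ω) x ≤ S ^ 2 / (4 * π * t) := by
  have hS := S_pos
  apply integral_le_const (empMeas_univ X hn ω) (by positivity)
  exact fun y => HKT_le ht ht4 _

lemma arith_tau_inv {L N τ Kv lg : ℝ} (h : L * (N * τ) = Kv * lg) (hK : 1 ≤ Kv)
    (hl : 1 ≤ lg) : 1 ≤ L * N * τ := by nlinarith
lemma arith_Kr {L N τ Kv lg rr : ℝ} (h : L * (N * τ) = Kv * lg) (hK : 1 ≤ Kv)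
    (hl : 1 ≤ lg) (hL : 0 ≤ L) (h3 : N * τ ≤ rr) : Kv ≤ L * rr := by nlinarith
lemma arith_D' {s τi : ℝ} (hs : 0 ≤ s) (h1 : 1 ≤ τi) : s * τi + 1 ≤ (s + 1) * τi := by nlinarith

end LpAux

set_option maxHeartbeats 1600000 in
/-- **Proposition 2.7.** `L^p` estimate on the bad event: with `t_n = (ln a)⁻¹ Kₙ n⁻¹ ln n`
and `cₙ → 0⁺` with `liminf Kₙ cₙ² > k + 5`, the quantities
`n^k E[1_{‖ρ_{tₙ,n}-1‖_∞ > cₙ} ∫ |ρ_{tₙ,n} - 1|^p dm]` are bounded over `n ≥ 2`. -/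
theorem lp_estimate_bad_event
    (p : ℝ) (hp : 1 < p)
    {Ω : Type*} [MeasureSpace Ω] [IsProbabilityMeasure (volume : Measure Ω)]
    (X : ℕ → Ω → T2) (hmeas : ∀ i, Measurable (X i))
    (hindep : ProbabilityTheory.iIndepFun X (volume : Measure Ω))
    (hlaw : ∀ i, Measure.map (X i) (volume : Measure Ω) = (volume : Measure T2))
    (a C₃ : ℝ) (ha : 1 < a) (hC₃ : 0 < C₃)
    (hconc : ∀ (n : ℕ) (d t : ℝ), 1 ≤ n → 0 < d → 0 < t →
      (volume : Measure Ω) {ω | d < supDist1 (heatDensity t (empMeas X n ω))} ≤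
        ENNReal.ofReal (C₃ / (d ^ 2 * t ^ 3) * a ^ (-((n : ℝ) * t * d ^ 2))))
    (K : ℕ → ℝ) (hK : ∀ n, 1 ≤ K n)
    (t : ℕ → ℝ) (htdef : ∀ n, t n = (Real.log a)⁻¹ * K n * (n : ℝ)⁻¹ * Real.log (n : ℝ))
    (ht1 : Tendsto (fun n : ℕ => (n : ℝ) * t n / Real.log (n : ℝ)) atTop atTop)
    (ht2 : Tendsto (fun n : ℕ => Real.log ((n : ℝ) * t n) / Real.log (n : ℝ)) atTop (nhds 0))
    (k : ℝ) (hk : 0 < k)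
    (c : ℕ → ℝ) (hc : ∀ n, 0 < c n) (hc0 : Tendsto c atTop (nhds 0))
    (hliminf : k + 5 < Filter.liminf (fun n : ℕ => K n * c n ^ 2) atTop) :
    ∃ M : ℝ, ∀ n : ℕ, 2 ≤ n →
      (n : ℝ) ^ k *
        (∫ ω, Set.indicator {ω' | c n < supDist1 (heatDensity (t n) (empMeas X n ω'))}
          (fun ω' => ∫ x : T2, |heatDensity (t n) (empMeas X n ω') x - 1| ^ p) ω) ≤ M := by
  have hp0 : (0:ℝ) ≤ p := by linarith
  set L := Real.log a with hLdef
  have hL0 : 0 < L := Real.log_pos ha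
  have hS := LpAux.S_pos
  set A0 : ℝ := LpAux.S^2/(4*π) + 1 with hA0def
  have hA0 : 1 ≤ A0 := by
    rw [hA0def]
    have : 0 ≤ LpAux.S^2/(4*π) := by positivity
    linarith
  set M₁ : ℝ := C₃ * L^3 * L with hM₁def
  set M₂ : ℝ := C₃ * (A0^p * L^p) * L^3 with hM₂def
  set M₀ : ℝ := M₁ + M₂ with hM₀def
  have hM₁0 : 0 < M₁ := by rw [hM₁def]; positivity
  have hM₂0 : 0 < M₂ := by
    rw [hM₂def]
    have hA0' : 0 < A0 := lt_of_lt_of_le one_pos hA0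
    positivity
  have hM₀0 : 0 < M₀ := by rw [hM₀def]; linarith
  -- eventual facts
  have hev1 : ∀ᶠ n in atTop, k + 5 ≤ K n * c n ^ 2 := by
    rw [Filter.liminf_eq] at hliminf
    rcases Set.eq_empty_or_nonempty {a_1 : ℝ | ∀ᶠ n in atTop, a_1 ≤ K n * c n ^ 2} with hAe | hAne
    · rw [hAe, Real.sSup_empty] at hliminf; linarith
    · obtain ⟨b, hbA, hb⟩ := exists_lt_of_lt_csSup hAne hliminf
      exact hbA.mono fun n hn => le_trans hb.le hn
  have hev2 : ∀ᶠ n in atTop, c n ≤ 1 ∧ k + p + 3 ≤ K n := by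
    have hd0 : 0 < (k+5)/(k+p+3) := by positivity
    have hpos : 0 < min 1 (Real.sqrt ((k+5)/(k+p+3))) :=
      lt_min one_pos (Real.sqrt_pos.2 hd0)
    filter_upwards [hc0.eventually (gt_mem_nhds hpos), hev1] with n hn h1
    have hc1 : c n ≤ 1 := le_of_lt (lt_of_lt_of_le hn (min_le_left _ _))
    refine ⟨hc1, ?_⟩
    have hcs : c n < Real.sqrt ((k+5)/(k+p+3)) := lt_of_lt_of_le hn (min_le_right _ _)
    have hcsq : c n ^ 2 < (k+5)/(k+p+3) := by
      have := pow_lt_pow_left₀ hcs (hc n).le (by norm_num : 2 ≠ 0)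
      rwa [Real.sq_sqrt hd0.le] at this
    have hK0 : (0:ℝ) < K n := lt_of_lt_of_le one_pos (hK n)
    have h2 : (k+5) ≤ K n * ((k+5)/(k+p+3)) :=
      le_trans h1 (mul_le_mul_of_nonneg_left hcsq.le hK0.le)
    have h3 : (k+5)/((k+5)/(k+p+3)) ≤ K n := by
      rw [div_le_iff₀ hd0]; linarith
    have h4 : (k+5)/((k+5)/(k+p+3)) = k+p+3 := by
      rw [div_div_eq_mul_div, mul_comm, mul_div_assoc, div_self (by linarith : k+5 ≠ 0), mul_one]

    linarith [h4 ▸ h3]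
  have hev3 : ∀ᶠ n : ℕ in atTop, (n:ℝ) * t n ≤ (n:ℝ) ^ ((1:ℝ)/2) := by
    filter_upwards [ht2.eventually (gt_mem_nhds one_half_pos), eventually_ge_atTop 3]
      with n hn h3
    have hN1 : (1:ℝ) < (n:ℝ) := by exact_mod_cast Nat.lt_of_lt_of_le (by norm_num) h3
    have hN0 : (0:ℝ) < (n:ℝ) := by linarith
    have hlog : 0 < Real.log (n:ℝ) := Real.log_pos hN1
    have ht0 : 0 < t n := by
      rw [htdef n]
      have := hK n
      positivity
    have hnt0 : 0 < (n:ℝ) * t n := by positivity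
    have hlt : Real.log ((n:ℝ) * t n) < (1/2) * Real.log (n:ℝ) := by
      rw [div_lt_iff₀ hlog] at hn; linarith
    have hr0 : (0:ℝ) < (n:ℝ) ^ ((1:ℝ)/2) := Real.rpow_pos_of_pos hN0 _
    rw [← Real.log_le_log_iff hnt0 hr0, Real.log_rpow hN0]
    linarith
  obtain ⟨N, hN⟩ := Filter.eventually_atTop.1 (hev1.and (hev2.and (hev3.and (eventually_ge_atTop 16))))
  -- main per-n bound
  have key : ∀ n : ℕ, N ≤ n →
      (n : ℝ) ^ k *
        (∫ ω, Set.indicator {ω' | c n < supDist1 (heatDensity (t n) (empMeas X n ω'))}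
          (fun ω' => ∫ x : T2, |heatDensity (t n) (empMeas X n ω') x - 1| ^ p) ω) ≤ M₀ := by
    intro n hn
    obtain ⟨h1, ⟨hc1, hKp⟩, h3, h16⟩ := hN n hn
    have hn1 : 1 ≤ n := by omega
    set N' : ℝ := (n : ℝ) with hN'def
    have hN16 : (16:ℝ) ≤ N' := by rw [hN'def]; exact_mod_cast h16
    have hN1 : (1:ℝ) ≤ N' := by linarith
    have hN0 : (0:ℝ) < N' := by linarith
    have hlog1 : 1 ≤ Real.log N' := by
      have h1' : Real.exp 1 ≤ N' := by
        have := Real.exp_one_lt_d9; linarith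
      calc (1:ℝ) = Real.log (Real.exp 1) := (Real.log_exp 1).symm
        _ ≤ Real.log N' := Real.log_le_log (Real.exp_pos 1) h1'
    set τ := t n with hτdef'
    have hτeq : τ = L⁻¹ * K n * N'⁻¹ * Real.log N' := htdef n
    have hK1 : (1:ℝ) ≤ K n := hK n
    have hlogpos : (0:ℝ) < Real.log N' := by linarith
    have hτ0 : 0 < τ := by
      rw [hτeq]
      exact mul_pos (mul_pos (mul_pos (inv_pos.2 hL0) (by linarith)) (inv_pos.2 hN0)) hlogpos
    have hnt : L * (N' * τ) = K n * Real.log N' := by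
      rw [hτeq]; field_simp
    set r : ℝ := N' ^ ((1:ℝ)/2) with hrdef
    have hr0 : 0 < r := Real.rpow_pos_of_pos hN0 _
    have hr2 : r ^ (2:ℕ) = N' := by
      rw [hrdef, ← Real.rpow_natCast (N' ^ ((1:ℝ)/2)) 2, ← Real.rpow_mul hN0.le]
      norm_num
    have hr4 : (4:ℝ) ≤ r := by
      have h164 : ((16:ℝ)) ^ ((1:ℝ)/2) = 4 := by
        rw [show (16:ℝ) = 4 ^ (2:ℕ) by norm_num, ← Real.rpow_natCast (4:ℝ) 2,
          ← Real.rpow_mul (by norm_num : (0:ℝ) ≤ 4)]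
        norm_num
      calc (4:ℝ) = (16:ℝ) ^ ((1:ℝ)/2) := h164.symm
        _ ≤ r := Real.rpow_le_rpow (by norm_num) hN16 (by norm_num)
    have hτ4 : τ ≤ 1/4 := by
      have hτle : τ ≤ r / N' := by
        rw [le_div_iff₀ hN0]; linarith [h3]
      have hrr : r / N' = r⁻¹ := by
        rw [← hr2, pow_two, div_mul_eq_div_div, div_self hr0.ne', one_div]
      have hrinv : r⁻¹ ≤ 1/4 := by
        rw [one_div]
        exact inv_anti₀ (by norm_num) hr4
      linarith [hrr ▸ hτle]
    have hτ1 : τ ≤ 1 := by linarith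
    have hτinv : τ⁻¹ ≤ L * N' := by
      rw [inv_eq_one_div, div_le_iff₀ hτ0]
      exact LpAux.arith_tau_inv hnt hK1 hlog1
    have hKr : K n ≤ L * r :=
      LpAux.arith_Kr hnt hK1 hlog1 hL0.le h3
    have hc2K : (c n ^ 2)⁻¹ ≤ K n := by
      have h6 : 1 ≤ K n * c n ^ 2 := by linarith
      rw [inv_eq_one_div, div_le_iff₀ (pow_pos (hc n) 2)]
      linarith
    -- density bounds
    set I : Ω → ℝ := fun ω => ∫ x : T2, |heatDensity τ (empMeas X n ω) x - 1| ^ p with hIdef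
    set bad₁ : Set Ω := {ω' : Ω | c n < supDist1 (heatDensity τ (empMeas X n ω'))} with hbad₁
    set bad₂ : Set Ω := {ω' : Ω | 1 < supDist1 (heatDensity τ (empMeas X n ω'))} with hbad₂
    set F : Ω → ℝ := bad₁.indicator I with hFdef
    set D' : ℝ := LpAux.S^2/(4*π*τ) + 1 with hD'def
    have hSq : (0:ℝ) ≤ LpAux.S^2/(4*π*τ) := by positivity
    have hD'1 : 1 ≤ D' := by rw [hD'def]; linarith
    set D : ℝ := D' ^ p with hDdef
    have hD0 : 0 < D := Real.rpow_pos_of_pos (by linarith) p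
    have habs : ∀ (ω : Ω) (x : T2), |heatDensity τ (empMeas X n ω) x - 1| ≤ D' := by
      intro ω x
      have h0 := LpAux.heatDensity_nonneg hτ0 (empMeas X n ω) x
      have hhi := LpAux.heatDensity_le hτ0 hτ4 X hn1 ω x
      rw [abs_le, hD'def]
      constructor <;> linarith
    have hI0 : ∀ ω, 0 ≤ I ω := fun ω =>
      integral_nonneg fun x => Real.rpow_nonneg (abs_nonneg _) p
    have hID : ∀ ω, I ω ≤ D := by
      intro ω
      apply LpAux.integral_le_const LpAux.T2_univ hD0
      intro x
      rw [hDdef]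
      exact Real.rpow_le_rpow (abs_nonneg _) (habs ω x) hp0
    have hsup_le : ∀ (ω : Ω) (x : T2),
        |heatDensity τ (empMeas X n ω) x - 1| ≤ supDist1 (heatDensity τ (empMeas X n ω)) := by
      intro ω x
      exact le_ciSup (f := fun y => |heatDensity τ (empMeas X n ω) y - 1|)
        ⟨D', by rintro _ ⟨y, rfl⟩; exact habs ω y⟩ x
    have hI1 : ∀ ω, ω ∉ bad₂ → I ω ≤ 1 := by
      intro ω hω
      have hsup : supDist1 (heatDensity τ (empMeas X n ω)) ≤ 1 := not_lt.1 hω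
      apply LpAux.integral_le_const LpAux.T2_univ one_pos
      intro x
      exact Real.rpow_le_one (abs_nonneg _) ((hsup_le ω x).trans hsup) hp0
    have hF0 : ∀ ω, 0 ≤ F ω := fun ω => Set.indicator_nonneg (fun ω' _ => hI0 ω') ω
    have hFD : ∀ ω, F ω ≤ D := by
      intro ω; rw [hFdef]; by_cases hω : ω ∈ bad₁
      · rw [Set.indicator_of_mem hω]; exact hID ω
      · rw [Set.indicator_of_notMem hω]; exact hD0.le
    have hF1 : ∀ ω, ω ∉ bad₂ → F ω ≤ 1 := by
      intro ω hω; rw [hFdef]; by_cases hω1 : ω ∈ bad₁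
      · rw [Set.indicator_of_mem hω1]; exact hI1 ω hω
      · rw [Set.indicator_of_notMem hω1]; norm_num
    have hint_le : ∫ ω, F ω ≤ 1 * (volume bad₁).toReal + D * (volume bad₂).toReal := by
      by_cases hInt : Integrable F (volume : Measure Ω)
      · have hmin_int : Integrable (fun ω => min (F ω) 1) (volume : Measure Ω) := by
          apply Integrable.mono hInt (hInt.aestronglyMeasurable.inf aestronglyMeasurable_const)
          apply ae_of_all
          intro ω
          show ‖min (F ω) 1‖ ≤ ‖F ω‖
          rw [Real.norm_eq_abs, Real.norm_eq_abs,
            abs_of_nonneg (le_min (hF0 ω) zero_le_one), abs_of_nonneg (hF0 ω)]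
          exact min_le_left _ _
        have hmax_int : Integrable (fun ω => max (F ω - 1) 0) (volume : Measure Ω) := by
          apply Integrable.mono hInt
            ((hInt.aestronglyMeasurable.sub aestronglyMeasurable_const).sup
              aestronglyMeasurable_const)
          apply ae_of_all
          intro ω
          show ‖max (F ω - 1) 0‖ ≤ ‖F ω‖
          rw [Real.norm_eq_abs, Real.norm_eq_abs,
            abs_of_nonneg (le_max_right (F ω - 1) 0), abs_of_nonneg (hF0 ω)]
          exact max_le (by linarith [hF0 ω]) (hF0 ω)
        have hsplit : ∫ ω, F ω = (∫ ω, min (F ω) 1) + ∫ ω, max (F ω - 1) 0 := by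
          rw [← integral_add hmin_int hmax_int]
          apply integral_congr_ae
          apply ae_of_all
          intro ω
          simp only [Pi.add_apply]
          rcases le_total (F ω) 1 with h | h
          · rw [min_eq_left h, max_eq_right (by linarith : F ω - 1 ≤ 0)]; ring
          · rw [min_eq_right h, max_eq_left (by linarith : (0:ℝ) ≤ F ω - 1)]; ring
        have hb1 : ∫ ω, min (F ω) 1 ≤ 1 * (volume bad₁).toReal :=
          LpAux.integral_le_mul_meas one_pos (measure_ne_top _ _)
            (fun ω _ => min_le_right _ _)
            (fun ω hω => by
              have hF : F ω = 0 := by rw [hFdef]; exact Set.indicator_of_notMem hω _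
              rw [hF]; norm_num)
        have hb2 : ∫ ω, max (F ω - 1) 0 ≤ D * (volume bad₂).toReal :=
          LpAux.integral_le_mul_meas hD0 (measure_ne_top _ _)
            (fun ω _ => max_le (by linarith [hFD ω]) hD0.le)
            (fun ω hω => max_le (by linarith [hF1 ω hω]) le_rfl)
        rw [hsplit]; exact add_le_add hb1 hb2
      · rw [integral_undef hInt]
        positivity
    have hp₁ := hconc n (c n) τ hn1 (hc n) hτ0
    have hp₂ := hconc n 1 τ hn1 one_pos hτ0
    have ha0 : (0:ℝ) < a := by linarith
    have hq₁0 : (0:ℝ) ≤ C₃ / (c n ^ 2 * τ ^ 3) * a ^ (-(N' * τ * c n ^ 2)) := by positivity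
    have hq₂0 : (0:ℝ) ≤ C₃ / (1 ^ 2 * τ ^ 3) * a ^ (-(N' * τ * 1 ^ 2)) := by positivity
    have hP₁ : (volume bad₁).toReal ≤ C₃ / (c n ^ 2 * τ ^ 3) * a ^ (-(N' * τ * c n ^ 2)) := by
      have h := ENNReal.toReal_mono ENNReal.ofReal_ne_top hp₁
      rwa [ENNReal.toReal_ofReal hq₁0] at h
    have hP₂ : (volume bad₂).toReal ≤ C₃ / (1 ^ 2 * τ ^ 3) * a ^ (-(N' * τ * 1 ^ 2)) := by
      have h := ENNReal.toReal_mono ENNReal.ofReal_ne_top hp₂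
      rwa [ENNReal.toReal_ofReal hq₂0] at h
    have hrw1 : a ^ (-(N' * τ * c n ^ 2)) = N' ^ (-(K n * c n ^ 2)) := by
      rw [Real.rpow_def_of_pos ha0, Real.rpow_def_of_pos hN0]
      congr 1
      linear_combination (-(c n ^ 2)) * hnt
    have hrw2 : a ^ (-(N' * τ * 1 ^ 2)) = N' ^ (-(K n)) := by
      rw [Real.rpow_def_of_pos ha0, Real.rpow_def_of_pos hN0]
      congr 1
      linear_combination (-1 : ℝ) * hnt
    have hτ3 : (τ ^ 3)⁻¹ ≤ L^3 * N' ^ (3:ℝ) := by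
      have h8 : (τ⁻¹)^(3:ℕ) ≤ (L * N')^(3:ℕ) :=
        pow_le_pow_left₀ (inv_nonneg.2 hτ0.le) hτinv 3
      rw [← inv_pow]
      calc (τ⁻¹)^(3:ℕ) ≤ (L * N')^(3:ℕ) := h8
        _ = L^3 * N'^(3:ℕ) := mul_pow L N' 3
        _ = L^3 * N'^(3:ℝ) := by rw [← Real.rpow_natCast N' 3]; norm_num
    have hexp1 : N' ^ (-(K n * c n ^ 2)) ≤ N' ^ (-(k+5)) :=
      Real.rpow_le_rpow_of_exponent_le hN1 (by linarith)
    have hexp2 : N' ^ (-(K n)) ≤ N' ^ (-(k+p+3)) :=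
      Real.rpow_le_rpow_of_exponent_le hN1 (by linarith)
    have hrpow_nn : (0:ℝ) ≤ N' ^ k := Real.rpow_nonneg hN0.le k
    have hterm1 : N'^k * (C₃ / (c n ^ 2 * τ ^ 3) * a ^ (-(N' * τ * c n ^ 2))) ≤ M₁ := by
      rw [hrw1]
      have e1 : C₃ / (c n ^2 * τ^3) = C₃ * (c n ^2)⁻¹ * (τ^3)⁻¹ := by
        rw [div_eq_mul_inv, mul_inv]; ring
      rw [e1]
      have hcK : (c n ^2)⁻¹ ≤ L * r := le_trans hc2K hKr
      have hb : C₃ * (c n ^2)⁻¹ * (τ^3)⁻¹ * N' ^ (-(K n * c n ^2))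
          ≤ C₃ * (L * r) * (L^3 * N' ^ (3:ℝ)) * N' ^ (-(k+5)) := by
        apply mul_le_mul _ hexp1 (Real.rpow_nonneg hN0.le _) (by positivity)
        apply mul_le_mul _ hτ3 (by positivity) (by positivity)
        exact mul_le_mul le_rfl hcK (by positivity) hC₃.le
      calc N'^k * (C₃ * (c n ^2)⁻¹ * (τ^3)⁻¹ * N' ^ (-(K n * c n ^2)))
          ≤ N'^k * (C₃ * (L * r) * (L^3 * N' ^ (3:ℝ)) * N' ^ (-(k+5))) :=
            mul_le_mul_of_nonneg_left hb hrpow_nn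
        _ = M₁ * (N'^k * N' ^ ((1:ℝ)/2) * N' ^ (3:ℝ) * N' ^ (-(k+5))) := by
            rw [hrdef, hM₁def]; ring
        _ = M₁ * N' ^ (k + (1:ℝ)/2 + 3 + -(k+5)) := by
            rw [← Real.rpow_add hN0, ← Real.rpow_add hN0, ← Real.rpow_add hN0]
        _ ≤ M₁ * 1 := by
            apply mul_le_mul_of_nonneg_left _ hM₁0.le
            exact Real.rpow_le_one_of_one_le_of_nonpos hN1 (by linarith)
        _ = M₁ := mul_one _
    have hD_le : D ≤ A0^p * (L^p * N'^p) := by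
      have h9 : D' ≤ A0 * τ⁻¹ := by
        have h10 : LpAux.S^2/(4*π*τ) = (LpAux.S^2/(4*π)) * τ⁻¹ := by
          rw [show (4*π*τ) = (4*π)*τ by ring, ← div_div, div_eq_mul_inv]
        have h11 : 1 ≤ τ⁻¹ := (one_le_inv₀ hτ0).2 hτ1
        have hS4 : (0:ℝ) ≤ LpAux.S^2/(4*π) := by positivity
        rw [hD'def, h10, hA0def]
        exact LpAux.arith_D' hS4 h11
      have hD'le : D' ≤ A0 * (L * N') :=
        h9.trans (mul_le_mul_of_nonneg_left hτinv (by linarith))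
      calc D = D'^p := hDdef
        _ ≤ (A0 * (L * N'))^p := Real.rpow_le_rpow (by linarith) hD'le hp0
        _ = A0^p * (L*N')^p := Real.mul_rpow (by linarith) (by positivity)
        _ = A0^p * (L^p * N'^p) := by rw [Real.mul_rpow hL0.le hN0.le]
    have hterm2 : N'^k * (D * (C₃ / (1 ^ 2 * τ ^ 3) * a ^ (-(N' * τ * 1 ^ 2)))) ≤ M₂ := by
      rw [hrw2]
      have e2 : C₃ / (1^2 * τ^3) = C₃ * (τ^3)⁻¹ := by
        rw [one_pow, one_mul, div_eq_mul_inv]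
      rw [e2]
      have hb : D * (C₃ * (τ^3)⁻¹ * N' ^ (-(K n))) ≤
          (A0^p * (L^p * N'^p)) * (C₃ * (L^3 * N' ^ (3:ℝ)) * N' ^ (-(k+p+3))) := by
        apply mul_le_mul hD_le _ (by positivity) (by positivity)
        apply mul_le_mul _ hexp2 (Real.rpow_nonneg hN0.le _) (by positivity)
        exact mul_le_mul le_rfl hτ3 (by positivity) hC₃.le
      calc N'^k * (D * (C₃ * (τ^3)⁻¹ * N' ^ (-(K n))))
          ≤ N'^k * ((A0^p * (L^p * N'^p)) * (C₃ * (L^3 * N' ^ (3:ℝ)) * N' ^ (-(k+p+3)))) :=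
            mul_le_mul_of_nonneg_left hb hrpow_nn
        _ = M₂ * (N'^k * N'^p * N' ^ (3:ℝ) * N' ^ (-(k+p+3))) := by
            rw [hM₂def]; ring
        _ = M₂ * N' ^ (k + p + 3 + -(k+p+3)) := by
            rw [← Real.rpow_add hN0, ← Real.rpow_add hN0, ← Real.rpow_add hN0]
        _ = M₂ * N' ^ (0:ℝ) := by rw [show k + p + 3 + -(k+p+3) = (0:ℝ) by ring]
        _ = M₂ := by rw [Real.rpow_zero, mul_one]
    calc N'^k * ∫ ω, F ω
        ≤ N'^k * (1 * (volume bad₁).toReal + D * (volume bad₂).toReal) :=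
          mul_le_mul_of_nonneg_left hint_le hrpow_nn
      _ ≤ N'^k * (C₃ / (c n ^ 2 * τ ^ 3) * a ^ (-(N' * τ * c n ^ 2)) +
            D * (C₃ / (1 ^ 2 * τ ^ 3) * a ^ (-(N' * τ * 1 ^ 2)))) := by
          apply mul_le_mul_of_nonneg_left _ hrpow_nn
          rw [one_mul]
          exact add_le_add hP₁ (mul_le_mul_of_nonneg_left hP₂ hD0.le)
      _ = N'^k * (C₃ / (c n ^ 2 * τ ^ 3) * a ^ (-(N' * τ * c n ^ 2))) +
            N'^k * (D * (C₃ / (1 ^ 2 * τ ^ 3) * a ^ (-(N' * τ * 1 ^ 2)))) := by ring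
      _ ≤ M₁ + M₂ := add_le_add hterm1 hterm2
      _ = M₀ := hM₀def.symm
  -- assemble
  refine ⟨M₀ + ∑ i ∈ Finset.range N, |(i : ℝ) ^ k *
      (∫ ω, Set.indicator {ω' | c i < supDist1 (heatDensity (t i) (empMeas X i ω'))}
        (fun ω' => ∫ x : T2, |heatDensity (t i) (empMeas X i ω') x - 1| ^ p) ω)|, ?_⟩
  intro n hn2
  have hsum0 : 0 ≤ ∑ i ∈ Finset.range N, |(i : ℝ) ^ k *
      (∫ ω, Set.indicator {ω' | c i < supDist1 (heatDensity (t i) (empMeas X i ω'))}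
        (fun ω' => ∫ x : T2, |heatDensity (t i) (empMeas X i ω') x - 1| ^ p) ω)| :=
    Finset.sum_nonneg fun i _ => abs_nonneg _
  rcases le_or_gt N n with h | h
  · linarith [key n h]
  · calc (n : ℝ) ^ k *
        (∫ ω, Set.indicator {ω' | c n < supDist1 (heatDensity (t n) (empMeas X n ω'))}
          (fun ω' => ∫ x : T2, |heatDensity (t n) (empMeas X n ω') x - 1| ^ p) ω)
        ≤ |(n : ℝ) ^ k *
          (∫ ω, Set.indicator {ω' | c n < supDist1 (heatDensity (t n) (empMeas X n ω'))}
            (fun ω' => ∫ x : T2, |heatDensity (t n) (empMeas X n ω') x - 1| ^ p) ω)| :=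
          le_abs_self _
      _ ≤ ∑ i ∈ Finset.range N, |(i : ℝ) ^ k *
          (∫ ω, Set.indicator {ω' | c i < supDist1 (heatDensity (t i) (empMeas X i ω'))}
            (fun ω' => ∫ x : T2, |heatDensity (t i) (empMeas X i ω') x - 1| ^ p) ω)| :=
          Finset.single_le_sum (f := fun i : ℕ => |(i : ℝ) ^ k *
            (∫ ω, Set.indicator {ω' | c i < supDist1 (heatDensity (t i) (empMeas X i ω'))}
              (fun ω' => ∫ x : T2, |heatDensity (t i) (empMeas X i ω') x - 1| ^ p) ω)|)
            (fun i _ => abs_nonneg _) (Finset.mem_range.2 h)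
      _ ≤ M₀ + _ := by linarith [hM₀0]


end
end

section
/- Let q > 1, c ≥ 0, r ∈ (1, ∞), and let f : T^2 → R be lower semicontinuous and satisfy −Δ_q f + c ≥ 0 in the viscosity sense. Then for every t > 0 the function f_t(x) := min_{y ∈ T^2} { f(y) + d(x,y)^r/(r t^{r−1}) } also satisfies −Δ_q f_t + c ≥ 0 in the viscosity sense. -/
open MeasureTheory Real Filter Topology
open scoped ENNReal

noncomputable section

section HopfLaxAux

/-- A lower semicontinuous real function on a compact nonempty space attains its minimum. -/
private lemma lsc_exists_min {X : Type*} [TopologicalSpace X] [CompactSpace X] [Nonempty X]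
    {g : X → ℝ} (hg : LowerSemicontinuous g) : ∃ x₀, ∀ x, g x₀ ≤ g x := by
  by_contra h
  push_neg at h
  have hcov : (Set.univ : Set X) ⊆ ⋃ y : X, g ⁻¹' Set.Ioi (g y) := by
    intro x _
    obtain ⟨y, hy⟩ := h x
    exact Set.mem_iUnion.2 ⟨y, hy⟩
  obtain ⟨s, hs⟩ := isCompact_univ.elim_finite_subcover _
    (fun y => hg.isOpen_preimage (g y)) hcov
  have hne : s.Nonempty := by
    rcases Set.mem_iUnion₂.1 (hs (Set.mem_univ (Classical.arbitrary X))) with ⟨y, hy, _⟩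
    exact ⟨y, hy⟩
  obtain ⟨y₀, hy₀s, hy₀⟩ := s.exists_min_image g hne
  rcases Set.mem_iUnion₂.1 (hs (Set.mem_univ y₀)) with ⟨y, hys, hy⟩
  exact absurd (hy₀ y hys) (not_le.2 hy)

private lemma dT_nonneg (x y : T2) : 0 ≤ dT x y := Real.sqrt_nonneg _

private lemma dT_self (x : T2) : dT x x = 0 := by simp [dT]

private lemma dT_comm (x y : T2) : dT x y = dT y x := by
  simp [dT, dist_comm]

private lemma dT_le_one (x y : T2) : dT x y ≤ 1 := by
  have h1 : dist x.1 y.1 ≤ 1/2 := by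
    rw [dist_eq_norm]
    simpa using AddCircle.norm_le_half_period (p := (1:ℝ)) (x := x.1 - y.1) one_ne_zero
  have h2 : dist x.2 y.2 ≤ 1/2 := by
    rw [dist_eq_norm]
    simpa using AddCircle.norm_le_half_period (p := (1:ℝ)) (x := x.2 - y.2) one_ne_zero
  have h3 : dist x.1 y.1 ^ 2 + dist x.2 y.2 ^ 2 ≤ 1 := by
    nlinarith [(dist_nonneg : (0:ℝ) ≤ dist x.1 y.1), (dist_nonneg : (0:ℝ) ≤ dist x.2 y.2)]
  calc dT x y ≤ Real.sqrt 1 := Real.sqrt_le_sqrt h3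
  _ = 1 := Real.sqrt_one

private lemma sqrt_sq_add_sq_add_le (a b c d : ℝ) :
    Real.sqrt ((a + c) ^ 2 + (b + d) ^ 2) ≤
      Real.sqrt (a ^ 2 + b ^ 2) + Real.sqrt (c ^ 2 + d ^ 2) := by
  set s1 := Real.sqrt (a ^ 2 + b ^ 2) with hs1
  set s2 := Real.sqrt (c ^ 2 + d ^ 2) with hs2
  have hs1n : 0 ≤ s1 := Real.sqrt_nonneg _
  have hs2n : 0 ≤ s2 := Real.sqrt_nonneg _
  have hsq1 : s1 ^ 2 = a ^ 2 + b ^ 2 := Real.sq_sqrt (by positivity)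
  have hsq2 : s2 ^ 2 = c ^ 2 + d ^ 2 := Real.sq_sqrt (by positivity)
  have hcs : a * c + b * d ≤ s1 * s2 := by
    have h1 : (a * c + b * d) ^ 2 ≤ (s1 * s2) ^ 2 := by
      have : (s1 * s2) ^ 2 = (a ^ 2 + b ^ 2) * (c ^ 2 + d ^ 2) := by
        rw [mul_pow, hsq1, hsq2]
      rw [this]
      nlinarith [sq_nonneg (a * d - b * c)]
    calc a * c + b * d ≤ |a * c + b * d| := le_abs_self _
    _ = Real.sqrt ((a * c + b * d) ^ 2) := (Real.sqrt_sq_eq_abs _).symm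
    _ ≤ Real.sqrt ((s1 * s2) ^ 2) := Real.sqrt_le_sqrt h1
    _ = s1 * s2 := Real.sqrt_sq (by positivity)
  have key : (a + c) ^ 2 + (b + d) ^ 2 ≤ (s1 + s2) ^ 2 := by nlinarith
  calc Real.sqrt ((a + c) ^ 2 + (b + d) ^ 2) ≤ Real.sqrt ((s1 + s2) ^ 2) :=
    Real.sqrt_le_sqrt key
  _ = s1 + s2 := Real.sqrt_sq (by positivity)

private lemma dT_triangle (x y z : T2) : dT x z ≤ dT x y + dT y z := by
  have h1 : dist x.1 z.1 ≤ dist x.1 y.1 + dist y.1 z.1 := dist_triangle _ _ _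
  have h2 : dist x.2 z.2 ≤ dist x.2 y.2 + dist y.2 z.2 := dist_triangle _ _ _
  have hmono : dT x z ≤
      Real.sqrt ((dist x.1 y.1 + dist y.1 z.1) ^ 2 + (dist x.2 y.2 + dist y.2 z.2) ^ 2) := by
    apply Real.sqrt_le_sqrt
    have n1 : (0:ℝ) ≤ dist x.1 z.1 := dist_nonneg
    have n2 : (0:ℝ) ≤ dist x.2 z.2 := dist_nonneg
    have n3 : (0:ℝ) ≤ dist x.1 y.1 := dist_nonneg
    have n4 : (0:ℝ) ≤ dist x.2 y.2 := dist_nonneg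
    have n5 : (0:ℝ) ≤ dist y.1 z.1 := dist_nonneg
    have n6 : (0:ℝ) ≤ dist y.2 z.2 := dist_nonneg
    nlinarith
  exact hmono.trans (sqrt_sq_add_sq_add_le _ _ _ _)

private lemma dT_add_sub (y x₀ y₀ : T2) : dT (y + (x₀ - y₀)) y = dT x₀ y₀ := by
  have h1 : ∀ b c d : AddCircle (1:ℝ), dist (b + (c - d)) b = dist c d := by
    intro b c d
    rw [dist_eq_norm, dist_eq_norm]
    congr 1
    abel
  unfold dT
  rw [Prod.fst_add, Prod.snd_add, Prod.fst_sub, Prod.snd_sub, h1, h1]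

private lemma continuous_dT_left (x : T2) : Continuous fun y : T2 => dT x y := by
  apply Continuous.sqrt
  exact ((continuous_const.dist (continuous_fst.comp continuous_id)).pow 2).add
    ((continuous_const.dist (continuous_snd.comp continuous_id)).pow 2)

/-- Mean value estimate for `rpow` on `[0,1]`. -/
private lemma rpow_lip {r : ℝ} (hr : 1 ≤ r) {a b : ℝ}
    (ha : a ∈ Set.Icc (0:ℝ) 1) (hb : b ∈ Set.Icc (0:ℝ) 1) :
    |a ^ r - b ^ r| ≤ r * |a - b| := by
  have H := Convex.norm_image_sub_le_of_norm_hasDerivWithin_le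
    (f := fun x : ℝ => x ^ r) (f' := fun x : ℝ => r * x ^ (r - 1)) (s := Set.Icc (0:ℝ) 1)
    (fun x _ => (Real.hasDerivAt_rpow_const (Or.inr hr)).hasDerivWithinAt)
    (fun x hx => by
      rw [Real.norm_eq_abs, abs_mul, abs_of_nonneg (by linarith : (0:ℝ) ≤ r),
        abs_of_nonneg (Real.rpow_nonneg hx.1 _)]
      have h1 : x ^ (r - 1) ≤ 1 := Real.rpow_le_one hx.1 hx.2 (by linarith)
      nlinarith)
    (convex_Icc 0 1) hb ha
  simpa [Real.norm_eq_abs] using H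

private lemma projT_repT (x : T2) : projT (repT x) = x := by
  have h1 : ∀ w : AddCircle (1:ℝ),
      (((AddCircle.equivIco 1 0 w : Set.Ico (0:ℝ) (0 + 1)) : ℝ) : AddCircle (1:ℝ)) = w :=
    fun w => (AddCircle.equivIco 1 0).symm_apply_apply w
  ext1 <;> simp only [projT, repT] <;> [exact h1 x.1; exact h1 x.2]

private lemma projT_add (z w : ℝ × ℝ) : projT (z + w) = projT z + projT w := by
  simp only [projT, Prod.fst_add, Prod.snd_add, Prod.mk_add_mk, QuotientAddGroup.mk_add]

private lemma projT_sub (z w : ℝ × ℝ) : projT (z - w) = projT z - projT w := by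
  simp only [projT, Prod.fst_sub, Prod.snd_sub, Prod.mk_sub_mk, QuotientAddGroup.mk_sub]

private lemma fderiv_shift {E F : Type*} [NormedAddCommGroup E] [NormedSpace ℝ E]
    [NormedAddCommGroup F] [NormedSpace ℝ F] (g : E → F) (a z : E)
    (hg : DifferentiableAt ℝ g (z + a)) :
    fderiv ℝ (fun w => g (w + a)) z = fderiv ℝ g (z + a) := by
  have h1 : HasFDerivAt (fun w : E => w + a) (ContinuousLinearMap.id ℝ E) z :=
    (hasFDerivAt_id z).add_const a
  have h2 := hg.hasFDerivAt.comp z h1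
  simpa [Function.comp_def] using h2.fderiv

end HopfLaxAux

/-- **Proposition 3.2.** The Hopf–Lax infimal convolution with any power `r ∈ (1,∞)`
preserves the viscosity supersolution property `-Δ_q f + c ≥ 0`. -/
theorem hopf_lax_preserves_supersolution
    (q : ℝ) (hq : 1 < q) (c : ℝ) (hc : 0 ≤ c) (r : ℝ) (hr : 1 < r)
    (f : T2 → ℝ) (hf : IsViscositySupersol q f (fun _ => c)) (t : ℝ) (ht : 0 < t) :
    IsViscositySupersol q
      (fun x => ⨅ y : T2, (f y + dT x y ^ r / (r * t ^ (r - 1)))) (fun _ => c) := by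
  classical
  haveI : Nonempty T2 := ⟨(0, 0)⟩
  have hr0 : (0:ℝ) < r := by linarith
  set C : ℝ := r * t ^ (r - 1) with hCdef
  have hC : 0 < C := mul_pos hr0 (Real.rpow_pos_of_pos ht _)
  have hfl : LowerSemicontinuous f := hf.1
  obtain ⟨ymin, hymin⟩ := lsc_exists_min hfl
  have hbdd : ∀ x : T2, BddBelow (Set.range fun y => f y + dT x y ^ r / C) := by
    intro x
    refine ⟨f ymin, ?_⟩
    rintro z ⟨y, rfl⟩
    have h1 : 0 ≤ dT x y ^ r / C := div_nonneg (Real.rpow_nonneg (dT_nonneg _ _) _) hC.le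
    have h2 := hymin y
    dsimp only
    linarith
  set F : T2 → ℝ := fun x => ⨅ y : T2, (f y + dT x y ^ r / C) with hFdef
  have hFle : ∀ x y, F x ≤ f y + dT x y ^ r / C := fun x y => ciInf_le (hbdd x) y
  have hkey : ∀ x x' : T2, F x ≤ F x' + r / C * dT x x' := by
    intro x x'
    have hle : ∀ y : T2, F x - r / C * dT x x' ≤ f y + dT x' y ^ r / C := by
      intro y
      have h1 : F x ≤ f y + dT x y ^ r / C := hFle x y
      have habs : |dT x y - dT x' y| ≤ dT x x' := by
        rw [abs_sub_le_iff]
        constructor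
        · have h := dT_triangle x x' y
          linarith
        · have h := dT_triangle x' x y
          rw [dT_comm x' x] at h
          linarith
      have h2 := rpow_lip hr.le ⟨dT_nonneg x y, dT_le_one x y⟩ ⟨dT_nonneg x' y, dT_le_one x' y⟩
      have h3 : dT x y ^ r ≤ dT x' y ^ r + r * dT x x' := by
        have h4 : r * |dT x y - dT x' y| ≤ r * dT x x' :=
          mul_le_mul_of_nonneg_left habs hr0.le
        have h5 := le_abs_self (dT x y ^ r - dT x' y ^ r)
        linarith
      have h6 : dT x y ^ r / C ≤ (dT x' y ^ r + r * dT x x') / C := by gcongr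
      rw [add_div] at h6
      have h7 : r * dT x x' / C = r / C * dT x x' := by ring
      linarith
    have h8 : F x - r / C * dT x x' ≤ F x' := le_ciInf hle
    linarith
  refine ⟨?_, ?_⟩
  · -- lower semicontinuity of F
    intro x u hu
    have h0 : Filter.Tendsto (fun x' : T2 => dT x x') (𝓝 x) (𝓝 0) := by
      have := (continuous_dT_left x).continuousAt (x := x)
      rwa [ContinuousAt, dT_self] at this
    have hδ : 0 < (F x - u) * C / r := by
      have : 0 < F x - u := by linarith
      positivity
    filter_upwards [h0.eventually_lt_const hδ] with x' hx'
    have hk := hkey x x'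
    have hrc : 0 < r / C := by positivity
    have h9 : r / C * dT x x' < r / C * ((F x - u) * C / r) :=
      mul_lt_mul_of_pos_left hx' hrc
    have h10 : r / C * ((F x - u) * C / r) = F x - u := by
      field_simp
    linarith
  · -- viscosity test condition
    intro x₀ φ hφ hmin hgrad
    have hlscg : LowerSemicontinuous fun y : T2 => f y + dT x₀ y ^ r / C := by
      apply LowerSemicontinuous.add hfl
      exact (((continuous_dT_left x₀).rpow_const fun y =>
        Or.inr hr0.le).div_const C).lowerSemicontinuous
    obtain ⟨y₀, hy₀⟩ := lsc_exists_min hlscg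
    have hFx₀ : F x₀ = f y₀ + dT x₀ y₀ ^ r / C := le_antisymm (hFle x₀ y₀) (le_ciInf hy₀)
    set v : T2 := x₀ - y₀ with hv
    set a : ℝ × ℝ := repT x₀ - repT y₀ with ha
    have hpa : projT a = v := by
      rw [ha, projT_sub, projT_repT, projT_repT, hv]
    have hrep : repT y₀ + a = repT x₀ := by rw [ha]; abel
    have hlift : (liftT fun y => φ (y + v)) = fun z => liftT φ (z + a) := by
      funext z
      show φ (projT z + v) = φ (projT (z + a))
      rw [projT_add, hpa]
    have hφ1 : Differentiable ℝ (liftT φ) := hφ.differentiable (by norm_num)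
    have hφd : ContDiff ℝ 1 (fderiv ℝ (liftT φ)) := hφ.fderiv_right (by norm_num)
    have hshift1 : ∀ z, fderiv ℝ (fun w => liftT φ (w + a)) z = fderiv ℝ (liftT φ) (z + a) :=
      fun z => fderiv_shift (liftT φ) a z (hφ1 (z + a))
    have hgradAt : ∀ z, gradAt (fun w => liftT φ (w + a)) z = gradAt (liftT φ) (z + a) := by
      intro z
      unfold gradAt
      rw [hshift1 z]
    have hdiffv : ∀ v0 : ℝ × ℝ, Differentiable ℝ fun y => fderiv ℝ (liftT φ) y v0 := by
      intro v0
      exact (hφd.clm_apply contDiff_const).differentiable one_ne_zero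
    have hhess : ∀ z v0 w0, hessAt (fun w => liftT φ (w + a)) z v0 w0
        = hessAt (liftT φ) (z + a) v0 w0 := by
      intro z v0 w0
      unfold hessAt
      have e1 : (fun y => fderiv ℝ (fun w => liftT φ (w + a)) y v0)
          = fun y => fderiv ℝ (liftT φ) (y + a) v0 := by
        funext y
        rw [hshift1 y]
      rw [e1]
      have h := fderiv_shift (fun y => fderiv ℝ (liftT φ) y v0) a z (hdiffv v0 (z + a))
      exact congrArg (fun L : (ℝ × ℝ) →L[ℝ] ℝ => L w0) h
    have hcd2 : ContDiff ℝ 2 (liftT fun y => φ (y + v)) := by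
      rw [hlift]
      exact hφ.comp (contDiff_id.add contDiff_const)
    have hgradeq : gradAt (liftT fun y => φ (y + v)) (repT y₀) = gradAt (liftT φ) (repT x₀) := by
      rw [hlift, hgradAt (repT y₀), hrep]
    have hqLapeq : qLap q (liftT fun y => φ (y + v)) (repT y₀)
        = qLap q (liftT φ) (repT x₀) := by
      unfold qLap
      rw [hlift]
      simp only [hgradAt, hhess, hrep]
    have hy₀v : y₀ + v = x₀ := by rw [hv]; abel
    have hminψ : IsLocalMin (fun y => f y - φ (y + v)) y₀ := by
      have htd : Filter.Tendsto (fun y : T2 => y + v) (𝓝 y₀) (𝓝 x₀) := by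
        rw [← hy₀v]
        exact (continuous_id.add continuous_const).tendsto y₀
      have h2 := htd.eventually hmin
      filter_upwards [h2] with y hy
      have hy' : F x₀ - φ x₀ ≤ F (y + v) - φ (y + v) := hy
      have hFy : F (y + v) ≤ f y + dT x₀ y₀ ^ r / C := by
        have h := hFle (y + v) y
        rwa [hv, dT_add_sub] at h
      show f y₀ - φ (y₀ + v) ≤ f y - φ (y + v)
      rw [hy₀v]
      linarith
    have hg' : gradAt (liftT fun y => φ (y + v)) (repT y₀) ≠ 0 := by
      rw [hgradeq]; exact hgrad
    have hres := hf.2 y₀ (fun y => φ (y + v)) hcd2 hminψ hg'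
    rw [hqLapeq] at hres
    exact hres

end
end
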